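/- Let n ≥ 1, L, M, V > 0, N ∈ ℕ, and h > 0 with 0 < h ≤ min{M, V/(2^{n−1}·L^{n−1}·N)}. Let G_{h,N} = {u_δ : δ ∈ {0,1}^{({0,…,N−1}^n)}} where u_δ(x) = Σ_ι h·δ_ι·χ_{int(□_ι)}(x). Then for every 0 < ε ≤ h·L^n/8, the covering number satisfies N_ε(G_{h,N} | L¹([0,L]^n)) ≥ e^{N^n/8}. -/

import Mathlib

open MeasureTheory Set

noncomputable def coveringNumber {α : Type*} (d : α → α → ℝ) (E : Set α) (ε : ℝ) : ℕ :=
  sInf {k | ∃ C : Finset (Set α), C.card = k ∧ (E ⊆ ⋃ s ∈ C, s) ∧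
    (∀ s ∈ C, ∀ x ∈ s, ∀ y ∈ s, d x y ≤ 2 * ε)}

noncomputable def entropy {α : Type*} (d : α → α → ℝ) (E : Set α) (ε : ℝ) : ℝ :=
  Real.logb 2 (coveringNumber d E ε)

abbrev Eucl (n : ℕ) := EuclideanSpace ℝ (Fin n)

/-- The divergence of a `C^1` vector field on `ℝ^n`. -/
noncomputable def divg {n : ℕ} (φ : Eucl n → Eucl n) (x : Eucl n) : ℝ :=
  ∑ i, fderiv ℝ φ x (EuclideanSpace.single i 1) i

/-- The set of numbers `∫_Ω u div φ` over test vector fields `φ ∈ C_c^1(Ω, ℝ^n)` with `‖φ‖ ≤ 1`;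
its supremum is the total variation `|Du|(Ω)` of the distributional derivative. -/
def testIntegrals {n : ℕ} (u : Eucl n → ℝ) (Ω : Set (Eucl n)) : Set ℝ :=
  {v | ∃ φ : Eucl n → Eucl n, ContDiff ℝ 1 φ ∧ HasCompactSupport φ ∧ tsupport φ ⊆ Ω ∧
    (∀ x, ‖φ x‖ ≤ 1) ∧ v = ∫ x in Ω, u x * divg φ x}

/-- The total variation `|Du|(Ω)` of the distributional derivative of `u` on `Ω`. -/
noncomputable def totalVariation {n : ℕ} (u : Eucl n → ℝ) (Ω : Set (Eucl n)) : ℝ :=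
  sSup (testIntegrals u Ω)

def cube (n : ℕ) (L : ℝ) : Set (Eucl n) := {x | ∀ i, x i ∈ Icc (0 : ℝ) L}

def opencube (n : ℕ) (L : ℝ) : Set (Eucl n) := {x | ∀ i, x i ∈ Ioo (0 : ℝ) L}

/-- The class `F_{[L,M,V]}` of `L¹` functions on `[0,L]^n`, bounded by `M` in `L^∞`,
whose distributional derivative is a finite Radon measure with `|Du|((0,L)^n) ≤ V`. -/
def Fclass (n : ℕ) (L M V : ℝ) : Set (Eucl n → ℝ) :=
  {u | IntegrableOn u (cube n L) ∧ (∀ᵐ x ∂(volume.restrict (cube n L)), |u x| ≤ M) ∧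
    ∀ v ∈ testIntegrals u (opencube n L), v ≤ V}

/-- The `L¹` distance on `[0,L]^n`. -/
noncomputable def dL1 (n : ℕ) (L : ℝ) (u v : Eucl n → ℝ) : ℝ :=
  ∫ x in cube n L, |u x - v x|

/-- The subcube `□_ι = ιL/N + [0, L/N]^n` of `[0,L]^n`, for `ι ∈ {0,…,N-1}^n`. -/
def subcube (n N : ℕ) (L : ℝ) (ι : Fin n → Fin N) : Set (Eucl n) :=
  {x | ∀ i, x i ∈ Icc (((ι i : ℕ) : ℝ) * (L / N)) ((((ι i : ℕ) : ℝ) + 1) * (L / N))}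

/-- The mean value `u_ι = (N/L)^n ∫_{□_ι} u` of `u` over the subcube `□_ι`. -/
noncomputable def cubeAvg (n N : ℕ) (L : ℝ) (u : Eucl n → ℝ) (ι : Fin n → Fin N) : ℝ :=
  ((N : ℝ) / L) ^ n * ∫ x in subcube n N L ι, u x

/-- The function `u_δ = ∑_ι h δ_ι χ_{int(□_ι)}` associated with a `0/1`-pattern `δ` on the
index set `{0,…,N-1}^n`. -/
noncomputable def udelta (n N : ℕ) (L h : ℝ) (δ : (Fin n → Fin N) → Bool) : Eucl n → ℝ :=
  fun x => ∑ ι : Fin n → Fin N,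
    Set.indicator (interior (subcube n N L ι)) (fun _ => if δ ι then h else 0) x

/-!
The `L¹` distance between `u_δ` and `u_δ'` is `h (L/N)^n` times the Hamming distance of `δ` and
`δ'`. Hence a set of diameter `2ε ≤ h L^n / 4` only meets the `u_δ` with `δ` in a Hamming ball of
radius `N^n / 4`, and the exponential moment `∑_δ 3^{-d(δ₀, δ)} = (4/3)^{N^n}` bounds such a ball
by `(3^{1/4} · 4/3)^{N^n}`. Covering all `2^{N^n}` patterns therefore takes at least
`(2 / (3^{1/4} · 4/3))^{N^n} ≥ e^{N^n/8}` sets.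
-/

namespace EuclideanSpace

variable {ι : Type*} [Fintype ι]

theorem interior_setOf_forall_mem (s : ι → Set ℝ) :
    interior {x : EuclideanSpace ℝ ι | ∀ i, x i ∈ s i} = {x | ∀ i, x i ∈ interior (s i)} := by
  have hpi : ∀ t : ι → Set ℝ,
      {x : EuclideanSpace ℝ ι | ∀ i, x i ∈ t i} = PiLp.homeomorph 2 _ ⁻¹' univ.pi t := by
    intro t; ext x; simp [PiLp.homeomorph]
  rw [hpi, ← Homeomorph.preimage_interior, interior_pi_set finite_univ, hpi]

theorem volume_setOf_forall_mem (s : ι → Set ℝ) (hs : ∀ i, MeasurableSet (s i)) :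
    volume {x : EuclideanSpace ℝ ι | ∀ i, x i ∈ s i} = ∏ i, volume (s i) := by
  rw [← volume_pi_pi, ← (PiLp.volume_preserving_ofLp ι).measure_preimage
    (MeasurableSet.univ_pi hs).nullMeasurableSet]
  congr 1
  ext x
  simp

end EuclideanSpace

section StepFunctions

open Function

variable {α ι : Type*} [Fintype ι] {s : ι → Set α}

theorem abs_sum_indicator_of_pairwiseDisjoint (hs : Pairwise (Disjoint on s)) (c : ι → ℝ)
    (x : α) :
    |∑ i, (s i).indicator (fun _ => c i) x| = ∑ i, (s i).indicator (fun _ => |c i|) x := by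
  by_cases hx : ∃ i, x ∈ s i
  · obtain ⟨i, hi⟩ := hx
    have hj : ∀ j ≠ i, x ∉ s j := fun j hji hj => (hs hji).le_bot ⟨hj, hi⟩
    rw [Fintype.sum_eq_single i fun j hji => indicator_of_notMem (hj j hji) _,
      Fintype.sum_eq_single i fun j hji => indicator_of_notMem (hj j hji) _,
      indicator_of_mem hi, indicator_of_mem hi]
  · push Not at hx
    simp [indicator_of_notMem (hx _)]

theorem integral_abs_sum_indicator [MeasurableSpace α] {μ : Measure α}
    (hs : Pairwise (Disjoint on s)) (hsm : ∀ i, MeasurableSet (s i)) (hfin : ∀ i, μ (s i) ≠ ⊤)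
    (c : ι → ℝ) :
    ∫ x, |∑ i, (s i).indicator (fun _ => c i) x| ∂μ = ∑ i, μ.real (s i) * |c i| := by
  simp_rw [abs_sum_indicator_of_pairwiseDisjoint hs]
  rw [integral_finsetSum _ fun i _ => (integrable_indicator_iff (hsm i)).2
    (integrableOn_const (hfin i))]
  simp [integral_indicator_const _ (hsm _)]

end StepFunctions

section Subcubes

variable {n N : ℕ} {L : ℝ}

theorem interior_subcube (ι : Fin n → Fin N) :
    interior (subcube n N L ι) =
      {x | ∀ i, x i ∈ Ioo (((ι i : ℕ) : ℝ) * (L / N)) ((((ι i : ℕ) : ℝ) + 1) * (L / N))} := by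
  simp only [subcube, EuclideanSpace.interior_setOf_forall_mem, interior_Icc]

theorem volume_interior_subcube (hL : 0 ≤ L) (ι : Fin n → Fin N) :
    volume (interior (subcube n N L ι)) = ENNReal.ofReal ((L / N) ^ n) := by
  rw [interior_subcube, EuclideanSpace.volume_setOf_forall_mem _ fun _ => measurableSet_Ioo,
    ENNReal.ofReal_pow (by positivity)]
  simp only [Real.volume_Ioo, add_mul, one_mul, add_sub_cancel_left, Finset.prod_const,
    Finset.card_univ, Fintype.card_fin]

theorem subcube_subset_cube (hN : 0 < N) (hL : 0 ≤ L) (ι : Fin n → Fin N) :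
    subcube n N L ι ⊆ cube n L := by
  intro x hx i
  have hk : ((ι i : ℕ) : ℝ) + 1 ≤ N := by exact_mod_cast (ι i).isLt
  have hcube : (N : ℝ) * (L / N) = L := by field_simp
  have := hx i
  constructor <;> nlinarith [mem_Icc.1 this, div_nonneg hL (Nat.cast_nonneg N)]

theorem disjoint_Ioo_natCast_mul {k k' : ℕ} (hkk' : k ≠ k') (c : ℝ) :
    Disjoint (Ioo ((k : ℝ) * c) ((k + 1) * c)) (Ioo ((k' : ℝ) * c) ((k' + 1) * c)) := by
  wlog hlt : k < k' generalizing k k'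
  · exact (this hkk'.symm (by omega)).symm
  rw [Set.disjoint_left]
  rintro x ⟨hkx, hxk⟩ ⟨hk'x, -⟩
  have hc : 0 < c := by linarith
  have : (k : ℝ) + 1 ≤ k' := by exact_mod_cast hlt
  nlinarith

open Function in
theorem pairwise_disjoint_interior_subcube :
    Pairwise (Disjoint on fun ι : Fin n → Fin N => interior (subcube n N L ι)) := by
  intro ι ι' hne
  obtain ⟨i, hi⟩ := Function.ne_iff.mp hne
  rw [onFun, interior_subcube, interior_subcube, Set.disjoint_left]
  exact fun x hx hx' => (disjoint_Ioo_natCast_mul (Fin.val_ne_of_ne hi) _).ne_of_mem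
    (hx i) (hx' i) rfl

end Subcubes

theorem abs_ite_sub_ite (h : ℝ) (b b' : Bool) :
    |(if b then h else 0) - (if b' then h else 0)| = |h| * if b ≠ b' then 1 else 0 := by
  cases b <;> cases b' <;> simp

theorem dL1_udelta {n N : ℕ} {L : ℝ} (hN : 0 < N) (hL : 0 ≤ L) (h : ℝ)
    (δ δ' : (Fin n → Fin N) → Bool) :
    dL1 n L (udelta n N L h δ) (udelta n N L h δ') = |h| * (L / N) ^ n * hammingDist δ δ' := by
  have hsub : ∀ x, udelta n N L h δ x - udelta n N L h δ' x =
      ∑ ι, (interior (subcube n N L ι)).indicator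
        (fun _ => (if δ ι then h else 0) - (if δ' ι then h else 0)) x := by
    intro x
    simp only [udelta, ← Finset.sum_sub_distrib, indicator_sub]
  have hvol : ∀ ι,
      (volume.restrict (cube n L)).real (interior (subcube n N L ι)) = (L / N) ^ n := by
    intro ι
    rw [measureReal_restrict_apply isOpen_interior.measurableSet,
      inter_eq_left.2 (interior_subset.trans (subcube_subset_cube hN hL ι)), measureReal_def,
      volume_interior_subcube hL, ENNReal.toReal_ofReal (by positivity)]
  have hfin : ∀ ι, volume.restrict (cube n L) (interior (subcube n N L ι)) ≠ ⊤ := fun ι =>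
    ((Measure.restrict_apply_le _ _).trans_lt
      ((volume_interior_subcube hL ι).trans_lt ENNReal.ofReal_lt_top)).ne
  simp_rw [dL1, hsub]
  rw [integral_abs_sum_indicator pairwise_disjoint_interior_subcube
    (fun _ => isOpen_interior.measurableSet) hfin, hammingDist, ← Finset.sum_boole,
    Finset.mul_sum]
  exact Finset.sum_congr rfl fun ι _ => by rw [hvol, abs_ite_sub_ite]; ring

section Hamming

open scoped Finset

variable {I : Type*} [Fintype I] [DecidableEq I]

theorem sum_pow_hammingDist (δ₀ : I → Bool) (t : ℝ) :
    ∑ δ : I → Bool, t ^ hammingDist δ₀ δ = (1 + t) ^ Fintype.card I := by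
  have hprod : ∀ δ : I → Bool, t ^ hammingDist δ₀ δ = ∏ i, if δ₀ i ≠ δ i then t else 1 := by
    intro δ
    rw [Finset.prod_ite, Finset.prod_const, Finset.prod_const_one, mul_one, hammingDist]
  have hfactor : ∀ i, ∑ b : Bool, (if δ₀ i ≠ b then t else 1) = 1 + t := by
    intro i
    cases δ₀ i <;> simp [add_comm]
  rw [Finset.sum_congr rfl fun δ _ => hprod δ,
    ← Fintype.prod_sum fun i (b : Bool) => if δ₀ i ≠ b then t else 1]
  simp only [hfactor, Finset.prod_const, Finset.card_univ]

theorem card_hammingDist_le_le (δ₀ : I → Bool) {t r : ℝ} (ht₀ : 0 < t) (ht₁ : t ≤ 1) :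
    (#{δ | (hammingDist δ₀ δ : ℝ) ≤ r} : ℝ) ≤ t ^ (-r) * (1 + t) ^ Fintype.card I := by
  have hone : ∀ δ ∈ ({δ | (hammingDist δ₀ δ : ℝ) ≤ r} : Finset (I → Bool)),
      (1 : ℝ) ≤ t ^ (-r) * t ^ hammingDist δ₀ δ := by
    intro δ hδ
    rw [← Real.rpow_natCast, ← Real.rpow_add ht₀]
    exact Real.one_le_rpow_of_pos_of_le_one_of_nonpos ht₀ ht₁
      (by linarith [(Finset.mem_filter.1 hδ).2])
  calc (#{δ | (hammingDist δ₀ δ : ℝ) ≤ r} : ℝ)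
      ≤ ∑ δ ∈ {δ | (hammingDist δ₀ δ : ℝ) ≤ r}, t ^ (-r) * t ^ hammingDist δ₀ δ := by
        simpa using Finset.card_nsmul_le_sum _ _ _ hone
    _ ≤ ∑ δ, t ^ (-r) * t ^ hammingDist δ₀ δ :=
        Finset.sum_le_sum_of_subset_of_nonneg (Finset.subset_univ _)
          fun _ _ _ => by positivity
    _ = t ^ (-r) * (1 + t) ^ Fintype.card I := by rw [← Finset.mul_sum, sum_pow_hammingDist]

end Hamming

theorem card_le_coveringNumber_mul {α ι : Type*} [Fintype ι] {d : α → α → ℝ} {ε B : ℝ}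
    (x : ι → α) (hd : ∀ i, d (x i) (x i) ≤ 2 * ε)
    (hB : ∀ s : Set α, (∀ a ∈ s, ∀ b ∈ s, d a b ≤ 2 * ε) → ({i | x i ∈ s}.ncard : ℝ) ≤ B) :
    (Fintype.card ι : ℝ) ≤ coveringNumber d (range x) ε * B := by
  classical
  have hsingletons : (Finset.univ.image fun i => ({x i} : Set α)).card ∈
      {k | ∃ C : Finset (Set α), C.card = k ∧ (range x ⊆ ⋃ s ∈ C, s) ∧
        (∀ s ∈ C, ∀ a ∈ s, ∀ b ∈ s, d a b ≤ 2 * ε)} := by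
    refine ⟨_, rfl, ?_, ?_⟩
    · rintro _ ⟨i, rfl⟩
      exact mem_biUnion (Finset.mem_image_of_mem _ (Finset.mem_univ i)) rfl
    · simp only [Finset.mem_image, Finset.mem_univ, true_and]
      rintro _ ⟨i, rfl⟩ a rfl b rfl
      exact hd i
  obtain ⟨C, hC, hcover, hdiam⟩ := Nat.sInf_mem ⟨_, hsingletons⟩
  have hunion : (Finset.univ : Finset ι) ⊆ C.biUnion fun s => {i | x i ∈ s} := by
    intro i _
    obtain ⟨s, hs, hxs⟩ := mem_iUnion₂.1 (hcover (mem_range_self i))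
    exact Finset.mem_biUnion.2 ⟨s, hs, Finset.mem_filter.2 ⟨Finset.mem_univ i, hxs⟩⟩
  calc (Fintype.card ι : ℝ)
      ≤ ∑ s ∈ C, (({i | x i ∈ s} : Finset ι).card : ℝ) := by
        exact_mod_cast (Finset.card_le_card hunion).trans Finset.card_biUnion_le
    _ ≤ ∑ _s ∈ C, B := Finset.sum_le_sum fun s hs => by
        simpa [Set.ncard_eq_toFinset_card'] using hB s (hdiam s hs)
    _ = coveringNumber d (range x) ε * B := by
        rw [Finset.sum_const, nsmul_eq_mul, coveringNumber, ← hC]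

theorem ncard_udelta_mem_le {n N : ℕ} {L h : ℝ} (hN : 0 < N) (hL : 0 < L) (hh : 0 < h)
    (s : Set (Eucl n → ℝ)) (hs : ∀ u ∈ s, ∀ v ∈ s, dL1 n L u v ≤ h * L ^ n / 4) :
    ({δ | udelta n N L h δ ∈ s}.ncard : ℝ) ≤ (3 ^ (1 / 4 : ℝ) * (4 / 3)) ^ N ^ n := by
  rcases eq_empty_or_nonempty {δ | udelta n N L h δ ∈ s} with hempty | ⟨δ₀, hδ₀⟩
  · rw [hempty, ncard_empty, Nat.cast_zero]
    positivity
  have hball : {δ | udelta n N L h δ ∈ s} ⊆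
      ↑(Finset.univ.filter fun δ => (hammingDist δ₀ δ : ℝ) ≤ (N : ℝ) ^ n / 4) := by
    intro δ hδ
    have hdist := hs _ hδ₀ _ hδ
    rw [dL1_udelta hN hL.le, abs_of_pos hh,
      show h * L ^ n / 4 = h * (L / N) ^ n * ((N : ℝ) ^ n / 4) by rw [div_pow]; field_simp] at hdist
    simpa using le_of_mul_le_mul_left hdist (by positivity)
  have hcard : Fintype.card (Fin n → Fin N) = N ^ n := by simp
  calc ({δ | udelta n N L h δ ∈ s}.ncard : ℝ)
      ≤ (Finset.univ.filter fun δ => (hammingDist δ₀ δ : ℝ) ≤ (N : ℝ) ^ n / 4).card := by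
        exact_mod_cast (ncard_le_ncard hball).trans (ncard_coe_finset _).le
    _ ≤ (1 / 3 : ℝ) ^ (-((N : ℝ) ^ n / 4)) * (1 + 1 / 3) ^ Fintype.card (Fin n → Fin N) :=
        card_hammingDist_le_le δ₀ (by norm_num) (by norm_num)
    _ = (3 ^ (1 / 4 : ℝ) * (4 / 3)) ^ N ^ n := by
        rw [hcard, mul_pow, ← Real.rpow_natCast (3 ^ (1 / 4 : ℝ)), ← Real.rpow_mul (by norm_num),
          Real.rpow_neg (by norm_num), ← Real.inv_rpow (by norm_num)]
        norm_num
        ring_nf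

theorem exp_one_div_eight_mul_le_two : Real.exp (1 / 8) * (3 ^ (1 / 4 : ℝ) * (4 / 3)) ≤ 2 := by
  -- raise to the 8th power: this is `e ≤ 729 / 256`
  have h8 : (Real.exp (1 / 8) * (3 ^ (1 / 4 : ℝ) * (4 / 3))) ^ 8 = Real.exp 1 * (65536 / 729) := by
    rw [mul_pow, mul_pow, ← Real.exp_nat_mul, ← Real.rpow_natCast (3 ^ (1 / 4 : ℝ)),
      ← Real.rpow_mul (by norm_num)]
    norm_num
  refine le_of_pow_le_pow_left₀ (by norm_num : 8 ≠ 0) (by norm_num) ?_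
  rw [h8]
  linarith [Real.exp_one_lt_d9]

theorem coveringNumber_udelta_ge_general (n N : ℕ) (hN : 0 < N) (L h : ℝ) (hL : 0 < L) (hh : 0 < h)
    (ε : ℝ) (hε : 0 < ε) (hεle : ε ≤ h * L ^ n / 8) :
    Real.exp ((N : ℝ) ^ n / 8) ≤
      (coveringNumber (dL1 n L) {u | ∃ δ : (Fin n → Fin N) → Bool, u = udelta n N L h δ} ε : ℝ) := by
  set c : ℝ := 3 ^ (1 / 4 : ℝ) * (4 / 3)
  have hrange : {u | ∃ δ : (Fin n → Fin N) → Bool, u = udelta n N L h δ} =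
      range (udelta n N L h) := by
    ext u
    simp [eq_comm]
  have hcount :
      (2 : ℝ) ^ N ^ n ≤ coveringNumber (dL1 n L) (range (udelta n N L h)) ε * c ^ N ^ n := by
    have := card_le_coveringNumber_mul (udelta n N L h) (ε := ε)
      (fun δ => by simp only [dL1, sub_self, abs_zero, integral_zero]; linarith)
      fun s hs => ncard_udelta_mem_le hN hL hh s fun u hu v hv =>
        (hs u hu v hv).trans (by linarith)
    rwa [Fintype.card_fun, Fintype.card_bool, Fintype.card_fun, Fintype.card_fin,
      Fintype.card_fin, Nat.cast_pow, Nat.cast_ofNat] at this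
  have hexp : Real.exp ((N : ℝ) ^ n / 8) * c ^ N ^ n ≤ 2 ^ N ^ n := by
    rw [show (N : ℝ) ^ n / 8 = (N ^ n : ℕ) * (1 / 8) by push_cast; ring, Real.exp_nat_mul,
      ← mul_pow]
    exact pow_le_pow_left₀ (by positivity) exp_one_div_eight_mul_le_two _
  rw [hrange]
  exact le_of_mul_le_mul_right (hexp.trans hcount) (by positivity)

/-- If `0 < h ≤ min{M, V/(2^{n-1} L^{n-1} N)}`, then for every
`0 < ε ≤ h L^n / 8`, the covering number of `G_{h,N} = {u_δ}` in `L¹([0,L]^n)` satisfies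
`N_ε(G_{h,N} | L¹([0,L]^n)) ≥ e^{N^n/8}`. -/
theorem coveringNumber_udelta_ge (n N : ℕ) (hn : 1 ≤ n) (hN : 0 < N) (L M V h : ℝ)
    (hL : 0 < L) (hM : 0 < M) (hV : 0 < V) (hh : 0 < h)
    (hhle : h ≤ min M (V / (2 ^ (n - 1) * L ^ (n - 1) * N)))
    (ε : ℝ) (hε : 0 < ε) (hεle : ε ≤ h * L ^ n / 8) :
    Real.exp ((N : ℝ) ^ n / 8) ≤
      (coveringNumber (dL1 n L) {u | ∃ δ : (Fin n → Fin N) → Bool, u = udelta n N L h δ} ε : ℝ) :=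
  coveringNumber_udelta_ge_general n N hN L h hL hh ε hε hεle
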